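/- arXiv:1909.12386 — 6 statements merged into one kernel-verified Lean document; each statement's English description precedes it below -/
import Mathlib

section
/- Let V = (d, Q, T) be an affine ℤ-VASS whose monoid M_V is finite, and let V' = (d, Q', T') be the ℤ-VASS with Q' = Q × M_V and T' = {((tgt(t), A), I, A·b(t), (src(t), A·A(t))) : A ∈ M_V, t ∈ T}. For every w ∈ T^*, if p(0) →_w q(v) in V, then (q, I)(0) →* (p, M(w))(v) in V'. -/
/-- An affine ℤ-VASS of dimension `d` with control-states `Q` and transitions `T`:
each transition `t` has a source state, a target state, a matrix `A(t)` and a vector `b(t)`. -/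
structure AffineZVASS (d : ℕ) (Q : Type) (T : Type) where
  src : T → Q
  tgt : T → Q
  mat : T → Matrix (Fin d) (Fin d) ℤ
  vec : T → (Fin d → ℤ)

namespace AffineZVASS

variable {d : ℕ} {Q T : Type}

/-- One step along transition `t`: from `src t (u)` to `tgt t (A(t)·u + b(t))`. -/
def Step (V : AffineZVASS d Q T) (t : T) (c c' : Q × (Fin d → ℤ)) : Prop :=
  c.1 = V.src t ∧ c' = (V.tgt t, (V.mat t).mulVec c.2 + V.vec t)

/-- `V.StepWord w c c'` : `c →_w c'`. -/
def StepWord (V : AffineZVASS d Q T) : List T → (Q × (Fin d → ℤ)) → (Q × (Fin d → ℤ)) → Prop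
  | [], c, c' => c = c'
  | t :: w, c, c' => ∃ c'', V.Step t c c'' ∧ V.StepWord w c'' c'

/-- Reachability: `c →* c'`. -/
def Reach (V : AffineZVASS d Q T) (c c' : Q × (Fin d → ℤ)) : Prop :=
  ∃ w : List T, V.StepWord w c c'

/-- `w` is a path from `p` to `q` in the underlying graph of `V`. -/
def IsPath (V : AffineZVASS d Q T) : List T → Q → Q → Prop
  | [], p, q => p = q
  | t :: w, p, q => V.src t = p ∧ V.IsPath w (V.tgt t) q

/-- The effect `w(u)` of a word of transitions on a counter vector:
`ε(u) = u` and `(wt)(u) = A(t)·(w(u)) + b(t)`. -/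
def eff (V : AffineZVASS d Q T) : List T → (Fin d → ℤ) → (Fin d → ℤ)
  | [], u => u
  | t :: w, u => V.eff w ((V.mat t).mulVec u + V.vec t)

/-- The matrix `M(w)`: `M(ε) = I` and `M(wt) = A(t)·M(w)`. -/
def Mword (V : AffineZVASS d Q T) : List T → Matrix (Fin d) (Fin d) ℤ
  | [] => 1
  | t :: w => V.Mword w * V.mat t

end AffineZVASS

namespace AffineZVASS

variable {d : ℕ} {Q T : Type}

/-- The monoid `M_V` of an affine ℤ-VASS: the submonoid of `ℤ^{d×d}` generated by the
matrices appearing on transitions. -/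
def monoidOf (V : AffineZVASS d Q T) : Submonoid (Matrix (Fin d) (Fin d) ℤ) :=
  Submonoid.closure (Set.range V.mat)

/-- The ℤ-VASS `V' = (d, Q', T')` with `Q' = Q × M_V` and
`T' = {((tgt t, A), I, A·b(t), (src t, A·A(t))) : A ∈ M_V, t ∈ T}`.
(The monoid component of a state is recorded as an arbitrary matrix; transitions only
connect states whose matrix components lie in `M_V`.) -/
def primed (V : AffineZVASS d Q T) :
    AffineZVASS d (Q × Matrix (Fin d) (Fin d) ℤ) (V.monoidOf × T) where
  src := fun s => (V.tgt s.2, (s.1 : Matrix (Fin d) (Fin d) ℤ))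
  tgt := fun s => (V.src s.2, (s.1 : Matrix (Fin d) (Fin d) ℤ) * V.mat s.2)
  mat := fun _ => 1
  vec := fun s => ((s.1 : Matrix (Fin d) (Fin d) ℤ)).mulVec (V.vec s.2)

end AffineZVASS

namespace AffineZVASS

variable {d : ℕ} {Q T : Type}

lemma Mword_mem (V : AffineZVASS d Q T) (w : List T) : V.Mword w ∈ V.monoidOf := by
  induction w with
  | nil => exact one_mem _
  | cons t w ih =>
      exact mul_mem ih (Submonoid.subset_closure ⟨t, rfl⟩)

lemma stepWord_append (V : AffineZVASS d Q T) {w1 w2 : List T} {c c' c'' : Q × (Fin d → ℤ)}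
    (h1 : V.StepWord w1 c c') (h2 : V.StepWord w2 c' c'') :
    V.StepWord (w1 ++ w2) c c'' := by
  induction w1 generalizing c with
  | nil => cases h1; exact h2
  | cons t w ih =>
      obtain ⟨cm, hs, hw⟩ := h1
      exact ⟨cm, hs, ih hw⟩

lemma aux_reach (V : AffineZVASS d Q T) (w : List T) :
    ∀ (p q : Q) (u v : Fin d → ℤ), V.StepWord w (p, u) (q, v) →
    ∀ (A : V.monoidOf) (x : Fin d → ℤ),
      V.primed.Reach ((q, (A : Matrix (Fin d) (Fin d) ℤ)), x)
        ((p, (A : Matrix (Fin d) (Fin d) ℤ) * V.Mword w),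
          x + (A : Matrix (Fin d) (Fin d) ℤ).mulVec v
            - ((A : Matrix (Fin d) (Fin d) ℤ) * V.Mword w).mulVec u) := by
  induction w with
  | nil =>
      intro p q u v h A x
      have h' : (p, u) = (q, v) := h
      injection h' with h1 h2
      subst h1; subst h2
      refine ⟨[], ?_⟩
      simp [StepWord, Mword]
  | cons t w ih =>
      intro p q u v h A x
      obtain ⟨c'', ⟨hp, hc⟩, hw⟩ := h
      subst hc
      have h1 := ih (V.tgt t) q ((V.mat t).mulVec u + V.vec t) v hw A x
      obtain ⟨w', hw'⟩ := h1
      refine ⟨w' ++ [(⟨(A : Matrix (Fin d) (Fin d) ℤ) * V.Mword w,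
        mul_mem A.2 (V.Mword_mem w)⟩, t)], V.primed.stepWord_append hw' ?_⟩
      refine ⟨_, ⟨rfl, rfl⟩, ?_⟩
      simp only [StepWord, primed, Mword]
      have hp' : p = V.src t := hp
      subst hp'
      simp only [Matrix.one_mulVec, Matrix.mul_assoc, Prod.mk.injEq,
        Matrix.mulVec_add, ← Matrix.mulVec_mulVec]
      refine ⟨?_, ?_⟩ <;> first | trivial | abel

end AffineZVASS

open AffineZVASS in
/-- If `p(0) →_w q(v)` in `V` (with `M_V` finite), then `(q, I)(0) →* (p, M(w))(v)`
in the ℤ-VASS `V'`. -/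
theorem reach_primed_of_stepWord
    (d : ℕ) (Q T : Type) [Fintype Q] [Fintype T] (V : AffineZVASS d Q T)
    (hfin : (V.monoidOf : Set (Matrix (Fin d) (Fin d) ℤ)).Finite)
    (w : List T) (p q : Q) (v : Fin d → ℤ)
    (h : V.StepWord w (p, 0) (q, v)) :
    V.primed.Reach ((q, (1 : Matrix (Fin d) (Fin d) ℤ)), 0) ((p, V.Mword w), v) := by
  have := V.aux_reach w p q 0 v h (1 : V.monoidOf) 0
  simpa using this
end

section
/- Let V = (d, Q, T) be an affine ℤ-VASS whose monoid M_V is finite, and let V' = (d, Q', T') be the ℤ-VASS with Q' = Q × M_V and T' = {((tgt(t), A), I, A·b(t), (src(t), A·A(t))) : A ∈ M_V, t ∈ T}. If (q, I)(0) →* (p, A)(v) in V' for some A ∈ M_V, then there exists w ∈ T^* such that M(w) = A and p(0) →_w q(v) in V. -/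
namespace AffineZVASS

variable {d : ℕ} {Q T : Type}

lemma Mword_append_singleton (V : AffineZVASS d Q T) (w : List T) (t : T) :
    V.Mword (w ++ [t]) = V.mat t * V.Mword w := by
  induction w with
  | nil => simp [Mword]
  | cons s w ih => simp [Mword, ih, mul_assoc]

lemma eff_append_singleton (V : AffineZVASS d Q T) (w : List T) (t : T) (x : Fin d → ℤ) :
    V.eff (w ++ [t]) x = (V.mat t).mulVec (V.eff w x) + V.vec t := by
  induction w generalizing x with
  | nil => simp [eff]
  | cons s w ih => simp [eff, ih]

lemma stepWord_append_singleton (V : AffineZVASS d Q T) {w : List T} {t : T}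
    {c c' c'' : Q × (Fin d → ℤ)} (h : V.StepWord w c c') (h' : V.Step t c' c'') :
    V.StepWord (w ++ [t]) c c'' := by
  induction w generalizing c with
  | nil => cases h; exact ⟨c'', h', rfl⟩
  | cons s w ih =>
    obtain ⟨m, hm, hm'⟩ := h
    exact ⟨m, hm, ih hm'⟩

lemma key (V : AffineZVASS d Q T) :
    ∀ (w' : List (V.monoidOf × T)) (q₀ : Q) (B : Matrix (Fin d) (Fin d) ℤ)
      (u : Fin d → ℤ) (p : Q) (A : Matrix (Fin d) (Fin d) ℤ) (v : Fin d → ℤ),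
      V.primed.StepWord w' ((q₀, B), u) ((p, A), v) →
      ∃ w : List T, A = B * V.Mword w ∧ v = u + B.mulVec (V.eff w 0) ∧
        V.StepWord w (p, 0) (q₀, V.eff w 0) := by
  intro w'
  induction w' with
  | nil =>
    intro q₀ B u p A v h
    simp only [StepWord, Prod.mk.injEq] at h
    obtain ⟨⟨hq, hB⟩, hv⟩ := h
    refine ⟨[], by simp [Mword, hB], by simp [eff, hv], ?_⟩
    simp [StepWord, eff, hq]
  | cons s rest ih =>
    intro q₀ B u p A v h
    obtain ⟨c'', ⟨hsrc, hc''⟩, hrest⟩ := h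
    simp only [primed, Prod.mk.injEq] at hsrc
    obtain ⟨hq₀, hB⟩ := hsrc
    subst hc''
    simp only [primed, Matrix.one_mulVec] at hrest
    obtain ⟨w, hM, hv, hsw⟩ := ih _ _ _ _ _ _ hrest
    refine ⟨w ++ [s.2], ?_, ?_, ?_⟩
    · rw [Mword_append_singleton, hM, hB, mul_assoc]
    · rw [hv, eff_append_singleton, hB]
      simp only [Matrix.mulVec_add, ← Matrix.mulVec_mulVec]
      abel
    · refine stepWord_append_singleton V hsw ?_
      exact ⟨rfl, by rw [eff_append_singleton, hq₀]⟩

end AffineZVASS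

open AffineZVASS in
/-- If `(q, I)(0) →* (p, A)(v)` in the ℤ-VASS `V'` for some `A ∈ M_V` (with `M_V` finite),
then there is `w ∈ T^*` with `M(w) = A` and `p(0) →_w q(v)` in `V`. -/
theorem stepWord_of_reach_primed
    (d : ℕ) (Q T : Type) [Fintype Q] [Fintype T] (V : AffineZVASS d Q T)
    (hfin : (V.monoidOf : Set (Matrix (Fin d) (Fin d) ℤ)).Finite)
    (p q : Q) (v : Fin d → ℤ) (A : Matrix (Fin d) (Fin d) ℤ) (hA : A ∈ V.monoidOf)
    (h : V.primed.Reach ((q, (1 : Matrix (Fin d) (Fin d) ℤ)), 0) ((p, A), v)) :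
    ∃ w : List T, V.Mword w = A ∧ V.StepWord w (p, 0) (q, v) := by
  obtain ⟨w', h⟩ := h
  obtain ⟨w, hM, hv, hsw⟩ := AffineZVASS.key V w' q 1 0 p A v h
  refine ⟨w, ?_, ?_⟩
  · rw [hM, one_mul]
  · have : v = V.eff w 0 := by simpa using hv
    rwa [← this] at hsw
end

section
/- Let V = (d, Q, T) be an affine ℤ-VASS whose monoid M_V is finite, and let p, q ∈ Q. Then the reachability relation {(u, v) ∈ ℤ^d × ℤ^d : p(u) →* q(v)}, viewed as a subset of ℤ^{2d}, is semilinear. -/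
namespace AffineZVASS

variable {d : ℕ} {Q T : Type}

/-- The vector `(x, y) ∈ ℤ^{2d}`. -/
def concatVec {d : ℕ} (x y : Fin d → ℤ) : Fin (2 * d) → ℤ := fun i =>
  if h : (i : ℕ) < d then x ⟨i, h⟩ else y ⟨(i : ℕ) - d, by omega⟩

end AffineZVASS

/-- A linear subset of `ℤ^k`: `{b + n₁·p₁ + ⋯ + n_m·p_m : n₁, …, n_m ∈ ℕ}`. -/
def IsLinearSet' {k : ℕ} (S : Set (Fin k → ℤ)) : Prop :=
  ∃ (b : Fin k → ℤ) (m : ℕ) (per : Fin m → (Fin k → ℤ)),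
    S = {x | ∃ n : Fin m → ℕ, x = b + ∑ i, (n i : ℤ) • per i}

/-- A semilinear subset of `ℤ^k`: a finite union of linear sets. -/
def IsSemilinearSet' {k : ℕ} (S : Set (Fin k → ℤ)) : Prop :=
  ∃ (m : ℕ) (L : Fin m → Set (Fin k → ℤ)), (∀ i, IsLinearSet' (L i)) ∧ S = ⋃ i, L i

open Set Pointwise

theorem IsLinearSet.isLinearSet' {k : ℕ} {S : Set (Fin k → ℤ)} (h : IsLinearSet S) :
    IsLinearSet' S := by
  obtain ⟨b, t, ht, rfl⟩ := h
  obtain ⟨m, per, -, rfl⟩ := ht.fin_param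
  refine ⟨b, m, per, ?_⟩
  ext x
  simp only [mem_vadd_set, SetLike.mem_coe, AddSubmonoid.mem_closure_range_iff_of_fintype,
    vadd_eq_add, natCast_zsmul, mem_ofPred_eq]
  constructor
  · rintro ⟨_, ⟨n, rfl⟩, rfl⟩
    exact ⟨n, rfl⟩
  · rintro ⟨n, rfl⟩
    exact ⟨_, ⟨n, rfl⟩, rfl⟩

theorem IsSemilinearSet.isSemilinearSet' {k : ℕ} {S : Set (Fin k → ℤ)}
    (h : IsSemilinearSet S) : IsSemilinearSet' S := by
  obtain ⟨F, hF, hlin, rfl⟩ := h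
  obtain ⟨m, L, -, rfl⟩ := hF.fin_param
  exact ⟨m, L, fun i => (hlin _ ⟨i, rfl⟩).isLinearSet', sUnion_range L⟩

structure LabeledGraph (σ E M : Type*) where
  src : E → σ
  tgt : E → σ
  label : E → M

namespace LabeledGraph

variable {σ E M : Type*} (G : LabeledGraph σ E M)

def IsWalk : List E → σ → σ → Prop
  | [], a, b => a = b
  | e :: w, a, b => G.src e = a ∧ IsWalk w (G.tgt e) b

variable {G} in
theorem IsWalk.append {u v : List E} {a b c : σ} (hu : G.IsWalk u a b) (hv : G.IsWalk v b c) :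
    G.IsWalk (u ++ v) a c := by
  induction u generalizing a with
  | nil => cases hu; exact hv
  | cons e u ih => exact ⟨hu.1, ih hu.2⟩

variable [AddCommMonoid M]

def walkSums (F : Set E) (a b : σ) : Set M :=
  {x | ∃ w, G.IsWalk w a b ∧ (∀ e ∈ w, e ∈ F) ∧ (w.map G.label).sum = x}

def walkSumsThrough (F : Set E) (e : E) (a b : σ) : Set M :=
  G.walkSums F a (G.src e) + {G.label e} +
    (AddSubmonoid.closure (G.walkSums F (G.tgt e) (G.src e) + {G.label e}) : Set M) +
    G.walkSums F (G.tgt e) b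

variable {F : Set E} {e : E} {a b c : σ} {x y : M}

theorem zero_mem_walkSums : (0 : M) ∈ G.walkSums F a a :=
  ⟨[], rfl, by simp, rfl⟩

theorem label_add_mem_walkSums (he : e ∈ F) (hx : x ∈ G.walkSums F (G.tgt e) b) :
    G.label e + x ∈ G.walkSums F (G.src e) b := by
  obtain ⟨w, hw, hF, rfl⟩ := hx
  exact ⟨e :: w, ⟨rfl, hw⟩, by simpa [he] using hF, by simp⟩

theorem add_mem_walkSums (hx : x ∈ G.walkSums F a b) (hy : y ∈ G.walkSums F b c) :
    x + y ∈ G.walkSums F a c := by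
  obtain ⟨u, hu, hFu, rfl⟩ := hx
  obtain ⟨v, hv, hFv, rfl⟩ := hy
  exact ⟨u ++ v, hu.append hv, fun e he => (List.mem_append.1 he).elim (hFu e) (hFv e), by simp⟩

theorem walkSums_mono {F' : Set E} (h : F ⊆ F') : G.walkSums F a b ⊆ G.walkSums F' a b := by
  rintro _ ⟨w, hw, hF, rfl⟩
  exact ⟨w, hw, fun e he => h (hF e he), rfl⟩

theorem closure_subset_walkSums {s : Set M} (hs : s ⊆ G.walkSums F a a) :
    (AddSubmonoid.closure s : Set M) ⊆ G.walkSums F a a := fun x hx => by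
  induction hx using AddSubmonoid.closure_induction with
  | mem x hx => exact hs hx
  | zero => exact G.zero_mem_walkSums
  | add x y _ _ hx hy => exact G.add_mem_walkSums hx hy

theorem walkSums_empty_subset : G.walkSums ∅ a b ⊆ {0} := by
  rintro _ ⟨_ | ⟨e, w⟩, -, hF, rfl⟩
  · rfl
  · exact absurd (hF e List.mem_cons_self) (notMem_empty e)

theorem mem_walkSumsThrough {z : M} (hx : x ∈ G.walkSums F a (G.src e))
    (hz : z ∈ AddSubmonoid.closure (G.walkSums F (G.tgt e) (G.src e) + {G.label e}))
    (hy : y ∈ G.walkSums F (G.tgt e) b) : x + G.label e + z + y ∈ G.walkSumsThrough F e a b :=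
  add_mem_add (add_mem_add (add_mem_add hx rfl) hz) hy

theorem walkSums_insert_subset :
    G.walkSums (insert e F) a b ⊆ G.walkSums F a b ∪ G.walkSumsThrough F e a b := by
  rintro _ ⟨w, hw, hF, rfl⟩
  induction w generalizing a with
  | nil => exact Or.inl ⟨[], hw, by simp, rfl⟩
  | cons f w ih =>
    obtain ⟨rfl, hw⟩ := hw
    have hf : f = e ∨ f ∈ F := hF f List.mem_cons_self
    rcases ih hw (fun g hg => hF g (List.mem_cons_of_mem f hg)) with hrest | hrest
    · rcases hf with rfl | hf
      · refine Or.inr ?_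
        convert G.mem_walkSumsThrough G.zero_mem_walkSums (AddSubmonoid.zero_mem _) hrest
          using 1
        simp
      · exact Or.inl (by simpa using G.label_add_mem_walkSums hf hrest)
    · obtain ⟨_, ⟨_, ⟨x, hx, _, rfl, rfl⟩, c, hc, rfl⟩, y, hy, hsum⟩ := hrest
      refine Or.inr ?_
      rcases hf with rfl | hf
      · have hloop : x + G.label f + c ∈ AddSubmonoid.closure
            (G.walkSums F (G.tgt f) (G.src f) + {G.label f}) :=
          add_mem (AddSubmonoid.subset_closure ⟨x, hx, _, rfl, rfl⟩) hc
        convert G.mem_walkSumsThrough G.zero_mem_walkSums hloop hy using 1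
        simp only [List.map_cons, List.sum_cons, ← hsum]
        abel
      · convert G.mem_walkSumsThrough (G.label_add_mem_walkSums hf hx) hc hy using 1
        simp only [List.map_cons, List.sum_cons, ← hsum]
        abel

theorem walkSumsThrough_subset : G.walkSumsThrough F e a b ⊆ G.walkSums (insert e F) a b := by
  have hsub : F ⊆ insert e F := subset_insert e F
  have he : G.label e ∈ G.walkSums (insert e F) (G.src e) (G.tgt e) := by
    simpa using G.label_add_mem_walkSums (mem_insert e F) G.zero_mem_walkSums
  have hloops : (AddSubmonoid.closure (G.walkSums F (G.tgt e) (G.src e) + {G.label e}) :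
      Set M) ⊆ G.walkSums (insert e F) (G.tgt e) (G.tgt e) := by
    refine G.closure_subset_walkSums ?_
    rintro _ ⟨z, hz, _, rfl, rfl⟩
    exact G.add_mem_walkSums (G.walkSums_mono hsub hz) he
  rintro _ ⟨_, ⟨_, ⟨x, hx, _, rfl, rfl⟩, c, hc, rfl⟩, y, hy, rfl⟩
  exact G.add_mem_walkSums (G.add_mem_walkSums
    (G.add_mem_walkSums (G.walkSums_mono hsub hx) he) (hloops hc)) (G.walkSums_mono hsub hy)

theorem walkSums_insert :
    G.walkSums (insert e F) a b = G.walkSums F a b ∪ G.walkSumsThrough F e a b :=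
  G.walkSums_insert_subset.antisymm
    (union_subset (G.walkSums_mono (subset_insert e F)) G.walkSumsThrough_subset)

theorem isSemilinearSet_walkSums [Finite E] (F : Set E) (a b : σ) :
    IsSemilinearSet (G.walkSums F a b) := by
  have hF := F.toFinite
  induction F, hF using Finite.induction_on generalizing a b with
  | empty => exact .of_finite ((finite_singleton 0).subset G.walkSums_empty_subset)
  | @insert e F _ _ ih =>
    rw [walkSums_insert]
    exact (ih a b).union ((((ih _ _).add (.singleton _)).add
      ((ih _ _).add (.singleton _)).closure).add (ih _ _))

end LabeledGraph

namespace AffineZVASS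

variable {d : ℕ} {Q T : Type} (V : AffineZVASS d Q T)

open Matrix

theorem eff_eq_mulVec_add_eff_zero (w : List T) (u : Fin d → ℤ) :
    V.eff w u = V.Mword w *ᵥ u + V.eff w 0 := by
  induction w generalizing u with
  | nil => simp [eff, Mword]
  | cons t w ih =>
    simp only [eff, Mword, ih (V.mat t *ᵥ u + V.vec t), ih (V.vec t),
      mulVec_add, mulVec_mulVec, mulVec_zero, zero_add, add_assoc]

theorem eff_cons_zero (t : T) (w : List T) :
    V.eff (t :: w) 0 = V.Mword w *ᵥ V.vec t + V.eff w 0 := by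
  simp [eff, V.eff_eq_mulVec_add_eff_zero w (V.vec t)]

theorem stepWord_iff (w : List T) (p : Q) (u : Fin d → ℤ) (c : Q × (Fin d → ℤ)) :
    V.StepWord w (p, u) c ↔ V.IsPath w p c.1 ∧ c.2 = V.eff w u := by
  induction w generalizing p u with
  | nil =>
    obtain ⟨q, v⟩ := c
    simp [StepWord, IsPath, eff, eq_comm]
  | cons t w ih => simp [StepWord, IsPath, eff, Step, ih, eq_comm, and_assoc]

theorem reach_iff {p q : Q} {u v : Fin d → ℤ} :
    V.Reach (p, u) (q, v) ↔ ∃ w, V.IsPath w p q ∧ V.eff w u = v := by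
  simp [Reach, stepWord_iff, eq_comm]

theorem Mword_mem_monoidOf (w : List T) : V.Mword w ∈ V.monoidOf := by
  induction w with
  | nil => exact one_mem _
  | cons t w ih => exact mul_mem ih (Submonoid.subset_closure ⟨t, rfl⟩)

def unfolding : LabeledGraph (Q × Matrix (Fin d) (Fin d) ℤ) (T × V.monoidOf) (Fin d → ℤ) where
  src e := (V.src e.1, e.2 * V.mat e.1)
  tgt e := (V.tgt e.1, e.2)
  label e := (e.2 : Matrix (Fin d) (Fin d) ℤ) *ᵥ V.vec e.1

theorem exists_isPath_of_isWalk_unfolding {x : List (T × V.monoidOf)} {p q : Q}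
    {M : Matrix (Fin d) (Fin d) ℤ} (hx : V.unfolding.IsWalk x (p, M) (q, 1)) :
    ∃ w, V.IsPath w p q ∧ V.Mword w = M ∧ V.eff w 0 = (x.map V.unfolding.label).sum := by
  induction x generalizing p M with
  | nil =>
    obtain ⟨rfl, rfl⟩ := Prod.mk.inj hx
    exact ⟨[], rfl, rfl, rfl⟩
  | cons e x ih =>
    obtain ⟨hsrc, hx⟩ := hx
    obtain ⟨rfl, rfl⟩ := Prod.mk.inj hsrc
    obtain ⟨w, hw, hM, heff⟩ := ih hx
    refine ⟨e.1 :: w, ⟨rfl, hw⟩, by simp [Mword, hM], ?_⟩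
    simp [eff_cons_zero, hM, heff, unfolding]

theorem exists_isWalk_unfolding_of_isPath {w : List T} {p q : Q} (hw : V.IsPath w p q) :
    ∃ x, V.unfolding.IsWalk x (p, V.Mword w) (q, 1) ∧
      (x.map V.unfolding.label).sum = V.eff w 0 := by
  induction w generalizing p with
  | nil =>
    obtain rfl : p = q := hw
    exact ⟨[], rfl, rfl⟩
  | cons t w ih =>
    obtain ⟨rfl, hw⟩ := hw
    obtain ⟨x, hx, hsum⟩ := ih hw
    refine ⟨(t, ⟨V.Mword w, V.Mword_mem_monoidOf w⟩) :: x, ⟨rfl, hx⟩, ?_⟩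
    rw [List.map_cons, List.sum_cons, hsum, eff_cons_zero]
    rfl

theorem mem_walkSums_unfolding_iff {p q : Q} {M : Matrix (Fin d) (Fin d) ℤ} {v : Fin d → ℤ} :
    v ∈ V.unfolding.walkSums univ (p, M) (q, 1) ↔
      ∃ w, V.IsPath w p q ∧ V.Mword w = M ∧ V.eff w 0 = v := by
  constructor
  · rintro ⟨x, hx, -, rfl⟩
    exact V.exists_isPath_of_isWalk_unfolding hx
  · rintro ⟨w, hw, rfl, rfl⟩
    obtain ⟨x, hx, hsum⟩ := V.exists_isWalk_unfolding_of_isPath hw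
    exact ⟨x, hx, fun _ _ => mem_univ _, hsum⟩

theorem isSemilinearSet_reach [Finite T]
    (hfin : (V.monoidOf : Set (Matrix (Fin d) (Fin d) ℤ)).Finite) (p q : Q) :
    IsSemilinearSet {uv : (Fin d → ℤ) × (Fin d → ℤ) | V.Reach (p, uv.1) (q, uv.2)} := by
  have : Finite V.monoidOf := hfin.to_subtype
  have hsplit : {uv : (Fin d → ℤ) × (Fin d → ℤ) | V.Reach (p, uv.1) (q, uv.2)} =
      ⋃ M : V.monoidOf, LinearMap.id.prod (M : Matrix (Fin d) (Fin d) ℤ).mulVecLin '' univ +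
        LinearMap.inr ℤ _ _ '' V.unfolding.walkSums univ (p, M) (q, 1) := by
    ext ⟨u, v⟩
    simp only [mem_ofPred_eq, reach_iff, mem_iUnion, mem_add, image_univ, mem_range, mem_image,
      mem_walkSums_unfolding_iff]
    constructor
    · rintro ⟨w, hw, rfl⟩
      exact ⟨⟨V.Mword w, V.Mword_mem_monoidOf w⟩, _, ⟨u, rfl⟩, _, ⟨_, ⟨w, hw, rfl, rfl⟩, rfl⟩,
        by simp [V.eff_eq_mulVec_add_eff_zero w u]⟩
    · rintro ⟨M, _, ⟨u', rfl⟩, _, ⟨_, ⟨w, hw, hM, rfl⟩, rfl⟩, h⟩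
      simp only [LinearMap.prod_apply, LinearMap.id_coe, Function.prod_apply, id_eq,
        mulVecBilin_apply, LinearMap.coe_inr, Prod.mk_add_mk, add_zero, Prod.ext_iff] at h
      obtain ⟨rfl, rfl⟩ := h
      exact ⟨w, hw, by rw [eff_eq_mulVec_add_eff_zero, hM]⟩
  rw [hsplit]
  exact .iUnion fun M => (IsSemilinearSet.univ.image _).add
    ((V.unfolding.isSemilinearSet_walkSums _ _ _).image _)

def concatVecHom (d : ℕ) : (Fin d → ℤ) × (Fin d → ℤ) →+ (Fin (2 * d) → ℤ) where
  toFun uv := concatVec uv.1 uv.2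
  map_zero' := by
    ext i
    simp [concatVec]
  map_add' _ _ := by
    ext i
    simp only [concatVec, Prod.fst_add, Prod.snd_add, Pi.add_apply]
    split_ifs <;> rfl

end AffineZVASS

open AffineZVASS in
theorem afmp_reach_semilinear_general
    (d : ℕ) (Q T : Type) [Fintype T] (V : AffineZVASS d Q T)
    (hfin : (V.monoidOf : Set (Matrix (Fin d) (Fin d) ℤ)).Finite)
    (p q : Q) :
    IsSemilinearSet'
      {x : Fin (2 * d) → ℤ | ∃ u v : Fin d → ℤ, x = concatVec u v ∧ V.Reach (p, u) (q, v)} := by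
  have hrel := (V.isSemilinearSet_reach hfin p q).image (concatVecHom d)
  convert hrel.isSemilinearSet' using 1
  ext x
  exact ⟨fun ⟨u, v, hx, h⟩ => ⟨(u, v), h, hx.symm⟩, fun ⟨(u, v), h, hx⟩ => ⟨u, v, hx.symm, h⟩⟩

open AffineZVASS in
/-- The reachability relation of an afmp-ℤ-VASS, viewed as a subset of `ℤ^{2d}`,
is semilinear. -/
theorem afmp_reach_semilinear
    (d : ℕ) (Q T : Type) [Fintype Q] [Fintype T] (V : AffineZVASS d Q T)
    (hfin : (V.monoidOf : Set (Matrix (Fin d) (Fin d) ℤ)).Finite)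
    (p q : Q) :
    IsSemilinearSet'
      {x : Fin (2 * d) → ℤ | ∃ u v : Fin d → ℤ, x = concatVec u v ∧ V.Reach (p, u) (q, v)} :=
  afmp_reach_semilinear_general d Q T V hfin p q
end

section
/- The set {(2^n, 2^n) : n ∈ ℕ}, viewed as a subset of ℤ², is not semilinear. -/
/-!
An infinite semilinear set contains an infinite linear set, and a linear set with two points
contains a ray `{b + t • d : t ∈ ℕ}` with `d ≠ 0`. Reading off a coordinate `j` with `d j ≠ 0`
gives a non-constant arithmetic progression of powers of two, which cannot exist: two consecutive
distinct powers of two differ by at least the smaller one, while the terms of the progression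
eventually exceed its common difference.
-/

/-- A linear subset of `ℤ^k`: `{b + n₁·p₁ + ⋯ + n_m·p_m : n₁, …, n_m ∈ ℕ}`. -/
def IsIntLinearSet {k : ℕ} (S : Set (Fin k → ℤ)) : Prop :=
  ∃ (b : Fin k → ℤ) (m : ℕ) (per : Fin m → (Fin k → ℤ)),
    S = {x | ∃ n : Fin m → ℕ, x = b + ∑ i, (n i : ℤ) • per i}

/-- A semilinear subset of `ℤ^k`: a finite union of linear sets. -/
def IsIntSemilinearSet {k : ℕ} (S : Set (Fin k → ℤ)) : Prop :=
  ∃ (m : ℕ) (L : Fin m → Set (Fin k → ℤ)), (∀ i, IsIntLinearSet (L i)) ∧ S = ⋃ i, L i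

theorem eq_zero_of_forall_add_mul_eq_two_pow {b d : ℤ}
    (h : ∀ t : ℕ, ∃ n : ℕ, b + t * d = 2 ^ n) : d = 0 := by
  by_contra hd
  rcases lt_or_gt_of_ne hd with hneg | hpos
  · obtain ⟨n, hn⟩ := h (b.natAbs + 1)
    have hpow : (0 : ℤ) < 2 ^ n := by positivity
    push_cast at hn
    nlinarith [le_abs_self b, abs_nonneg b]
  · obtain ⟨m, hm⟩ := h (b.natAbs + 2)
    obtain ⟨n, hn⟩ := h (b.natAbs + 3)
    push_cast at hm hn
    have hmn : m < n := (pow_lt_pow_iff_right₀ (one_lt_two : (1 : ℤ) < 2)).mp (by linarith)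
    have hgap : (2 : ℤ) ^ m * 2 ≤ 2 ^ n := pow_succ (2 : ℤ) m ▸ pow_le_pow_right₀ one_le_two hmn
    -- so `2 ^ m ≤ d`, whereas `2 ^ m = b + (|b| + 2) * d ≥ 2 * d`
    nlinarith [neg_abs_le b, abs_nonneg b]

theorem IsIntLinearSet.exists_ray_subset {k : ℕ} {S : Set (Fin k → ℤ)} (hS : IsIntLinearSet S)
    (hnt : S.Nontrivial) : ∃ b d : Fin k → ℤ, d ≠ 0 ∧ ∀ t : ℕ, b + t • d ∈ S := by
  obtain ⟨b, m, per, rfl⟩ := hS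
  obtain ⟨x, ⟨n, rfl⟩, hx⟩ := hnt.exists_ne b
  refine ⟨b, ∑ i, (n i : ℤ) • per i, fun h => hx (by rw [h, add_zero]), fun t => ?_⟩
  refine ⟨fun i => t * n i, ?_⟩
  simp only [Finset.smul_sum, ← Nat.cast_smul_eq_nsmul ℤ, smul_smul, Nat.cast_mul]

theorem IsIntSemilinearSet.exists_ray_subset {k : ℕ} {S : Set (Fin k → ℤ)}
    (hS : IsIntSemilinearSet S) (hinf : S.Infinite) :
    ∃ b d : Fin k → ℤ, d ≠ 0 ∧ ∀ t : ℕ, b + t • d ∈ S := by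
  obtain ⟨m, L, hL, rfl⟩ := hS
  obtain ⟨i, hi⟩ : ∃ i, (L i).Infinite := by
    by_contra! hfin
    exact hinf (Set.finite_iUnion hfin)
  obtain ⟨b, d, hd, hray⟩ := (hL i).exists_ray_subset hi.nontrivial
  exact ⟨b, d, hd, fun t => Set.mem_iUnion_of_mem i (hray t)⟩

/-- The set `{(2^n, 2^n) : n ∈ ℕ} ⊆ ℤ²` is not semilinear. -/
theorem powers_of_two_not_semilinear :
    ¬ IsIntSemilinearSet {x : Fin 2 → ℤ | ∃ n : ℕ, x = ![2 ^ n, 2 ^ n]} := by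
  intro hS
  have hinj : Function.Injective fun n : ℕ => (![2 ^ n, 2 ^ n] : Fin 2 → ℤ) := fun m n h =>
    pow_right_injective₀ two_pos (by norm_num) (congrFun h 0)
  obtain ⟨b, d, hd, hray⟩ :=
    hS.exists_ray_subset (Set.infinite_of_injective_forall_mem hinj fun n => ⟨n, rfl⟩)
  obtain ⟨j, hj⟩ := Function.ne_iff.mp hd
  refine hj (eq_zero_of_forall_add_mul_eq_two_pow (b := b j) fun t => ?_)
  obtain ⟨n, hn⟩ := hray t
  refine ⟨n, ?_⟩
  have := congrFun hn j
  fin_cases j <;> simpa using this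
end

section
/- Let V = (d, Q, T) be an affine ℤ-VASS in which every transition t ∈ T satisfies either A(t) = I, or A(t) = 𝟙 and b(t) = 0, where 𝟙 is the d×d all-ones matrix, and let T_I and T_𝟙 be the corresponding sets of transitions. Let W = (Q, T̄) be the affine one-counter ℤ-net with T̄ = {t̄ : t ∈ T}, where t̄ = (src(t), +, δ(b(t)), tgt(t)) if t ∈ T_I and t̄ = (src(t), ·, d, tgt(t)) if t ∈ T_𝟙, and where δ(v) = Σ_{i=1}^{d} v(i). Then for all p, q ∈ Q, u ∈ ℤ^d, m ∈ ℤ and w ∈ T^*: p(δ(u)) →_{w̄} q(m) in W if and only if there exists v ∈ ℤ^d with δ(v) = m and p(u) →_w q(v) in V (here w̄ is the sequence of transitions of W corresponding letterwise to w). -/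
namespace AffineZVASS

variable {d : ℕ} {Q T : Type}

/-- The `d×d` all-ones matrix `𝟙`. -/
def allOnes (d : ℕ) : Matrix (Fin d) (Fin d) ℤ :=
  Matrix.of fun _ _ => 1

/-- `δ(v) = ∑_{i=1}^d v(i)`. -/
def delta {d : ℕ} (v : Fin d → ℤ) : ℤ := ∑ i, v i

/-- The effect of the one-counter-net transition `t̄` associated with transition `t`:
`n ↦ n + δ(b(t))` if `t ∈ T_I` (i.e. `A(t) = I`), and `n ↦ n · d` if `t ∈ T_𝟙`. -/
def netEff (V : AffineZVASS d Q T) (t : T) (n : ℤ) : ℤ :=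
  if V.mat t = 1 then n + delta (V.vec t) else n * d

/-- Runs of the affine one-counter ℤ-net `W = (Q, T̄)` along the word `w̄` corresponding
letterwise to a word `w` of transitions of `V`. -/
def NetStepWord (V : AffineZVASS d Q T) : List T → (Q × ℤ) → (Q × ℤ) → Prop
  | [], c, c' => c = c'
  | t :: w, c, c' => c.1 = V.src t ∧ V.NetStepWord w (V.tgt t, netEff V t c.2) c'

end AffineZVASS


open AffineZVASS in
lemma netEff_delta {d : ℕ} {Q T : Type} (V : AffineZVASS d Q T)
    (hT : ∀ t : T, V.mat t = 1 ∨ (V.mat t = allOnes d ∧ V.vec t = 0))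
    (t : T) (u : Fin d → ℤ) :
    netEff V t (delta u) = delta ((V.mat t).mulVec u + V.vec t) := by
  unfold netEff
  by_cases h : V.mat t = 1
  · simp [h, delta, Finset.sum_add_distrib]
  · rcases hT t with h1 | ⟨h2, h3⟩
    · exact absurd h1 h
    · rw [if_neg h, h2, h3, add_zero]
      simp [delta, allOnes, Matrix.mulVec, dotProduct, mul_comm]

open AffineZVASS in
/-- Correspondence between an affine ℤ-VASS `V` (whose matrices are `I` or `𝟙`) and its
associated affine one-counter ℤ-net `W`: `p(δ(u)) →_{w̄} q(m)` in `W` iff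
`p(u) →_w q(v)` in `V` for some `v` with `δ(v) = m`. -/
theorem net_correspondence
    (d : ℕ) (Q T : Type) [Fintype Q] [Fintype T] (V : AffineZVASS d Q T)
    (hT : ∀ t : T, V.mat t = 1 ∨ (V.mat t = allOnes d ∧ V.vec t = 0))
    (p q : Q) (u : Fin d → ℤ) (m : ℤ) (w : List T) :
    V.NetStepWord w (p, delta u) (q, m) ↔
      ∃ v : Fin d → ℤ, delta v = m ∧ V.StepWord w (p, u) (q, v) := by
  induction w generalizing p u with
  | nil =>
    simp only [AffineZVASS.NetStepWord, AffineZVASS.StepWord, Prod.ext_iff]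
    constructor
    · rintro ⟨rfl, rfl⟩
      exact ⟨u, rfl, rfl, rfl⟩
    · rintro ⟨v, rfl, rfl, rfl⟩
      exact ⟨rfl, rfl⟩
  | cons t w ih =>
    constructor
    · rintro ⟨hp, hrest⟩
      rw [netEff_delta V hT t u] at hrest
      obtain ⟨v, hv, hstep⟩ := (ih _ _).mp hrest
      exact ⟨v, hv, ⟨(V.tgt t, (V.mat t).mulVec u + V.vec t), ⟨hp, rfl⟩, hstep⟩⟩
    · rintro ⟨v, hv, c'', ⟨hp, hc⟩, hstep⟩
      refine ⟨hp, ?_⟩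
      rw [netEff_delta V hT t u]
      exact (ih _ _).mpr ⟨v, hv, hc ▸ hstep⟩
end

section
/- Let V₁ be the affine ℤ-VASS of dimension 2 with a single control-state p and transitions (p, 𝟙, 0, p), (p, I, e₁, p), (p, I, −e₁, p), (p, I, e₂, p), (p, I, −e₂, p), where 𝟙 is the 2×2 all-ones matrix and e₁, e₂ are the unit vectors of ℤ². Then p(u) →* p(v) for all u, v ∈ ℤ²; in particular, the reachability relation of V₁ is all of ℤ² × ℤ² and hence semilinear, even though the monoid M_{V₁} is infinite. -/
/-- A linear subset of `ℤ^k`: `{b + n₁·p₁ + ⋯ + n_m·p_m : n₁, …, n_m ∈ ℕ}`. -/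
def IsLinearSetZ {k : ℕ} (S : Set (Fin k → ℤ)) : Prop :=
  ∃ (b : Fin k → ℤ) (m : ℕ) (per : Fin m → (Fin k → ℤ)),
    S = {x | ∃ n : Fin m → ℕ, x = b + ∑ i, (n i : ℤ) • per i}

/-- A semilinear subset of `ℤ^k`: a finite union of linear sets. -/
def IsSemilinearSetZ {k : ℕ} (S : Set (Fin k → ℤ)) : Prop :=
  ∃ (m : ℕ) (L : Fin m → Set (Fin k → ℤ)), (∀ i, IsLinearSetZ (L i)) ∧ S = ⋃ i, L i

/-!
The identity-matrix transitions of `V₁` are loops that translate the counters by `±e₁, ±e₂`.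
The shifts `b` for which `p(u) →* p(u + b)` holds for every `u` form a submonoid of `ℤ²`
(runs concatenate), and `±e₁, ±e₂` generate `ℤ²` as a monoid, so every vector is such a shift
and every configuration reaches every other. The monoid is infinite because
`𝟙 ^ (n + 1) = 2 ^ n • 𝟙`.
-/

namespace AffineZVASS

section Reachability

variable {d : ℕ} {Q T : Type} {V : AffineZVASS d Q T}

theorem Reach.refl (V : AffineZVASS d Q T) (c : Q × (Fin d → ℤ)) : V.Reach c c := ⟨[], rfl⟩

theorem StepWord.append {w₁ w₂ : List T} {a b c : Q × (Fin d → ℤ)}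
    (h₁ : V.StepWord w₁ a b) (h₂ : V.StepWord w₂ b c) : V.StepWord (w₁ ++ w₂) a c := by
  induction w₁ generalizing a with
  | nil => cases h₁; exact h₂
  | cons t w ih =>
    obtain ⟨a', hstep, hw⟩ := h₁
    exact ⟨a', hstep, ih hw⟩

theorem Reach.trans {a b c : Q × (Fin d → ℤ)} (h₁ : V.Reach a b) (h₂ : V.Reach b c) :
    V.Reach a c :=
  let ⟨w₁, h₁⟩ := h₁
  let ⟨w₂, h₂⟩ := h₂
  ⟨w₁ ++ w₂, h₁.append h₂⟩

variable (V) in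
def shifts (q : Q) : AddSubmonoid (Fin d → ℤ) where
  carrier := {b | ∀ u, V.Reach (q, u) (q, u + b)}
  zero_mem' u := by simpa using Reach.refl V (q, u)
  add_mem' {a b} ha hb u := (ha u).trans (by simpa [add_assoc] using hb (u + a))

theorem vec_mem_shifts {t : T} {q : Q} (hsrc : V.src t = q) (htgt : V.tgt t = q)
    (hmat : V.mat t = 1) : V.vec t ∈ V.shifts q := fun u =>
  ⟨[t], (q, u + V.vec t), ⟨hsrc.symm, by rw [htgt, hmat, Matrix.one_mulVec]⟩, rfl⟩

theorem reach_of_shifts_eq_top {q : Q} (h : V.shifts q = ⊤) (u v : Fin d → ℤ) :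
    V.Reach (q, u) (q, v) := by
  simpa using (h ▸ AddSubmonoid.mem_top (v - u) : v - u ∈ V.shifts q) u

end Reachability

def signedUnitVec (k : ℕ) : Fin (k + k) → Fin k → ℤ :=
  Fin.append (fun i => Pi.single i 1) (fun i => -Pi.single i 1)

theorem closure_range_signedUnitVec (k : ℕ) :
    AddSubmonoid.closure (Set.range (signedUnitVec k)) = ⊤ := by
  -- split each coordinate into its positive and negative part: `z = z.toNat - (-z).toNat`
  refine (AddSubmonoid.eq_top_iff' _).2 fun x => AddSubmonoid.mem_closure_range_iff_of_fintype.2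
    ⟨Fin.append (fun i => (x i).toNat) (fun i => (-x i).toNat), ?_⟩
  ext j
  rw [Fin.sum_univ_add]
  simp only [signedUnitVec, Fin.append_left, Fin.append_right]
  simp only [nsmul_eq_mul, smul_neg, Finset.sum_neg_distrib, Pi.add_apply, Finset.sum_apply,
    Pi.mul_apply, Pi.natCast_apply, Int.ofNat_toNat, Pi.single_apply, mul_ite, mul_one, mul_zero,
    Finset.sum_ite_eq, Finset.mem_univ, ↓reduceIte, Pi.neg_apply]
  omega

theorem isLinearSetZ_univ (k : ℕ) : IsLinearSetZ (Set.univ : Set (Fin k → ℤ)) := by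
  refine ⟨0, k + k, signedUnitVec k, Set.ext fun x => ?_⟩
  simpa [eq_comm] using
    (AddSubmonoid.mem_closure_range_iff_of_fintype (x := x)).1
      (closure_range_signedUnitVec k ▸ AddSubmonoid.mem_top x)

theorem isSemilinearSetZ_univ (k : ℕ) : IsSemilinearSetZ (Set.univ : Set (Fin k → ℤ)) :=
  ⟨1, fun _ => Set.univ, fun _ => isLinearSetZ_univ k, (Set.iUnion_const _).symm⟩

theorem concatVec_surjective (d : ℕ) :
    Function.Surjective fun p : (Fin d → ℤ) × (Fin d → ℤ) => concatVec p.1 p.2 := by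
  intro x
  refine ⟨(fun j => x ⟨j, by omega⟩, fun j => x ⟨j + d, by omega⟩), funext fun i => ?_⟩
  by_cases h : (i : ℕ) < d
  · simp [concatVec, h]
  · simp only [concatVec, dif_neg h]
    congr
    omega

theorem allOnes_mul_self (d : ℕ) : allOnes d * allOnes d = (d : ℤ) • allOnes d := by
  ext i j
  simp [allOnes, Matrix.mul_apply]

theorem allOnes_pow_succ (d n : ℕ) : allOnes d ^ (n + 1) = ((d : ℤ) ^ n) • allOnes d := by
  induction n with
  | zero => simp
  | succ n ih => rw [pow_succ, ih, smul_mul_assoc, allOnes_mul_self, smul_smul, pow_succ]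

theorem infinite_of_allOnes_mem {d : ℕ} (hd : 2 ≤ d) {S : Submonoid (Matrix (Fin d) (Fin d) ℤ)}
    (h : allOnes d ∈ S) : (S : Set (Matrix (Fin d) (Fin d) ℤ)).Infinite := by
  refine Set.infinite_of_injective_forall_mem (f := fun n : ℕ => allOnes d ^ (n + 1))
    (fun m n hmn => ?_) fun n => S.pow_mem h (n + 1)
  have h₀ : 0 < d := by omega
  have := congrFun₂ (show allOnes d ^ (m + 1) = allOnes d ^ (n + 1) from hmn) ⟨0, h₀⟩ ⟨0, h₀⟩
  rw [allOnes_pow_succ, allOnes_pow_succ] at this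
  simp only [Matrix.smul_apply, allOnes, Matrix.of_apply, smul_eq_mul, mul_one] at this
  exact Nat.pow_right_injective hd (by exact_mod_cast this)

end AffineZVASS

open AffineZVASS in
/-- The affine ℤ-VASS `V₁` of dimension 2 with a single control-state `p` and transitions
`(p, 𝟙, 0, p)`, `(p, I, ±e₁, p)`, `(p, I, ±e₂, p)`: every configuration is reachable from
every configuration, so the reachability relation is all of `ℤ² × ℤ²` and hence
semilinear, even though `M_{V₁}` is infinite. -/
theorem allOnes_example_reach_univ
    (V : AffineZVASS 2 (Fin 1) (Fin 5))
    (hsrc : V.src = fun _ => 0) (htgt : V.tgt = fun _ => 0)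
    (hmat : V.mat = ![allOnes 2, 1, 1, 1, 1])
    (hvec : V.vec = ![0, ![1, 0], ![-1, 0], ![0, 1], ![0, -1]]) :
    (∀ u v : Fin 2 → ℤ, V.Reach (0, u) (0, v)) ∧
    {x : (Fin 2 → ℤ) × (Fin 2 → ℤ) | V.Reach (0, x.1) (0, x.2)} = Set.univ ∧
    IsSemilinearSetZ
      {x : Fin (2 * 2) → ℤ | ∃ u v : Fin 2 → ℤ, x = concatVec u v ∧ V.Reach (0, u) (0, v)} ∧
    (Submonoid.closure (Set.range V.mat) : Set (Matrix (Fin 2) (Fin 2) ℤ)).Infinite := by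
  have hshift (t : Fin 5) (ht : t ≠ 0) : V.vec t ∈ V.shifts 0 :=
    vec_mem_shifts (by rw [hsrc]) (by rw [htgt]) (by rw [hmat]; fin_cases t <;> simp_all)
  have hsigned : ∀ i, ∃ t ≠ 0, V.vec t = signedUnitVec 2 i := by
    rw [hvec]; decide
  have htop : V.shifts 0 = ⊤ := by
    rw [eq_top_iff, ← closure_range_signedUnitVec, AddSubmonoid.closure_le]
    rintro _ ⟨i, rfl⟩
    obtain ⟨t, ht, hvt⟩ := hsigned i
    exact hvt ▸ hshift t ht
  have hreach := reach_of_shifts_eq_top htop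
  refine ⟨hreach, Set.eq_univ_of_forall fun x => hreach x.1 x.2, ?_,
    infinite_of_allOnes_mem le_rfl (Submonoid.subset_closure ⟨0, by rw [hmat]; rfl⟩)⟩
  convert isSemilinearSetZ_univ (2 * 2)
  refine Set.eq_univ_of_forall fun x => ?_
  obtain ⟨⟨u, v⟩, rfl⟩ := concatVec_surjective 2 x
  exact ⟨u, v, rfl, hreach u v⟩
end
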